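/- arXiv:2408.04728 — 3 statements merged into one kernel-verified Lean document; each statement's English description precedes it below -/
import Mathlib

section
/- Let n = 3f + 1. If a certificate C_{v+1} extending C_v was formed by votes of n - f replicas each having C_v as its highest known certificate, then for every view w > v there cannot exist a certificate C_w conflicting with C_v: otherwise the f + 1 correct voters locked on C_v together with the f + 1 correct voters of C_w would be disjoint sets of correct replicas totaling 2f + 2, exceeding the 2f + 1 correct replicas. -/
/-- if C_{v+1} extending C_v was formed by n - f replicas locked on C_v,
then no certificate of a higher view conflicting with C_v can exist. -/
theorem stmt_5 {Replica Cert : Type} [Fintype Replica] [DecidableEq Replica]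
    (n f : ℕ) (hn : n = 3 * f + 1) (hcard : Fintype.card Replica = n)
    (Faulty : Finset Replica) (hF : Faulty.card = f)
    (view : Cert → ℕ) (Conflicts : Cert → Cert → Prop)
    (voters : Cert → Finset Replica)
    (Cv Cv1 : Cert)
    (hview1 : view Cv1 = view Cv + 1)
    (hvoters1 : n - f ≤ (voters Cv1).card)
    -- every correct voter of C_{v+1} is locked on C_v: it does not vote for any
    -- certificate conflicting with C_v
    (hlocked : ∀ C : Cert, Conflicts C Cv →
      ∀ r ∈ voters Cv1, r ∉ Faulty → r ∉ voters C) :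
    ∀ Cw : Cert, view Cv < view Cw → Conflicts Cw Cv →
      (voters Cw).card < n - f := by
  intro Cw hvw hconf
  have hScard : f + 1 ≤ (voters Cv1 \ Faulty).card := by
    have := Finset.le_card_sdiff Faulty (voters Cv1)
    omega
  have hsub : voters Cw ⊆ Finset.univ \ (voters Cv1 \ Faulty) := by
    intro r hr
    simp only [Finset.mem_sdiff, Finset.mem_univ, true_and, not_and, not_not]
    intro h1
    by_contra h2
    exact hlocked Cw hconf r h1 h2 hr
  have h1 : (voters Cw).card ≤ (Finset.univ \ (voters Cv1 \ Faulty)).card := Finset.card_le_card hsub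
  have h2 : (Finset.univ \ (voters Cv1 \ Faulty)).card = Fintype.card Replica - (voters Cv1 \ Faulty).card := by
    rw [Finset.card_sdiff_of_subset (Finset.subset_univ _), Finset.card_univ]
  have hSle : (voters Cv1 \ Faulty).card ≤ Fintype.card Replica := Finset.card_le_univ _
  omega
end

section
/- In a round-robin leader rotation over n = 3f + 1 replicas where at most f replicas are faulty, any window of 3f + 1 consecutive views contains three consecutive views whose leaders are all correct. -/
/-- with round-robin leaders over n = 3f + 1 replicas and at most f faulty,
there exist three consecutive views (residues mod n) whose leaders are all correct. -/
theorem stmt_7 (f : ℕ) (F : Finset (Fin (3 * f + 1))) (hF : F.card ≤ f) :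
    ∃ i : Fin (3 * f + 1), i ∉ F ∧ i + 1 ∉ F ∧ i + 2 ∉ F := by
  classical
  set B := F ∪ F.image (· - 1) ∪ F.image (· - 2) with hB
  have hcard : B.card ≤ 3 * f := by
    have h0 := Finset.card_union_le (F ∪ F.image (· - 1)) (F.image (· - 2))
    have h3 := Finset.card_union_le F (F.image (· - 1))
    have h1 := Finset.card_image_le (f := (· - 1)) (s := F)
    have h2 := Finset.card_image_le (f := (· - 2)) (s := F)
    simp only [← hB] at h0
    omega
  obtain ⟨i, hi⟩ : ∃ i, i ∉ B := by
    by_contra h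
    push_neg at h
    have : B = Finset.univ := Finset.eq_univ_iff_forall.mpr h
    rw [this, Finset.card_univ, Fintype.card_fin] at hcard
    omega
  refine ⟨i, ?_, ?_, ?_⟩
  · intro h; exact hi (by simp [hB, h])
  · intro h
    apply hi
    simp only [hB, Finset.mem_union, Finset.mem_image]
    exact Or.inl (Or.inr ⟨i + 1, h, by simp⟩)
  · intro h
    apply hi
    simp only [hB, Finset.mem_union, Finset.mem_image]
    exact Or.inr ⟨i + 2, h, by simp⟩
end

section
/- Suppose some correct replica holds a certificate C_{(s*,v*)} lexicographically higher than the leader's C_{(s_lp,v_lp)}, with n = 3f + 1 total replicas. Then at least f + 1 correct replicas voted for B_{(s*,v*)}. Consequently, if the leader receives n - k NewView messages (1 ≤ k ≤ f) and fewer than f + 1 - k of them vote for any slot higher than (s_lp, v_lp), then no correct replica holds a certificate higher than the leader's. -/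
/-- Lexicographic (view-major) order on (slot, view) pairs. -/
def slotLexLt (p q : ℕ × ℕ) : Prop :=
  p.2 < q.2 ∨ (p.2 = q.2 ∧ p.1 < q.1)

/-- (a) any formed certificate has at least f + 1 correct voters;
(b) if the leader receives NewView messages from n - k replicas (1 ≤ k ≤ f) and fewer
than f + 1 - k of them report a vote for a slot higher than the leader's (s_lp, v_lp),
then no correct replica holds a certificate higher than the leader's. -/
theorem stmt_14 {Replica : Type} [Fintype Replica] [DecidableEq Replica]
    (n f : ℕ) (hn : n = 3 * f + 1) (hcard : Fintype.card Replica = n)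
    (Faulty : Finset Replica) (hF : Faulty.card ≤ f)
    (lp : ℕ × ℕ)  -- the leader's highest certificate (s_lp, v_lp)
    (certFormed : ℕ × ℕ → Prop)
    (voters : ℕ × ℕ → Finset Replica)
    (hvoters : ∀ p : ℕ × ℕ, certFormed p → n - f ≤ (voters p).card)
    (holdsCert : Replica → ℕ × ℕ → Prop)
    (hholds : ∀ r : Replica, ∀ p : ℕ × ℕ, holdsCert r p → certFormed p)
    (k : ℕ) (hk1 : 1 ≤ k) (hkf : k ≤ f)
    (Received : Finset Replica) (hRec : Received.card = n - k)
    (reportsHigher : Replica → Prop) [DecidablePred reportsHigher]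
    -- each correct receiving replica that voted for a higher slot reports it
    (hreport : ∀ r ∈ Received, r ∉ Faulty →
      ∀ p : ℕ × ℕ, r ∈ voters p → slotLexLt lp p → reportsHigher r)
    (hfew : (Received.filter reportsHigher).card < f + 1 - k) :
    (∀ p : ℕ × ℕ, certFormed p → f + 1 ≤ ((voters p) \ Faulty).card) ∧
    (∀ r : Replica, r ∉ Faulty → ∀ p : ℕ × ℕ,
      holdsCert r p → ¬ slotLexLt lp p) := by
  have hcorrect : ∀ p : ℕ × ℕ, certFormed p → f + 1 ≤ ((voters p) \ Faulty).card := by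
    intro p hp
    have h1 := hvoters p hp
    have h2 : (voters p).card ≤ ((voters p) \ Faulty).card + Faulty.card := by
      have := Finset.card_le_card_sdiff_add_card (s := voters p) (t := Faulty)
      omega
    omega
  refine ⟨hcorrect, ?_⟩
  intro r hr p hold hlt
  have hcf := hholds r p hold
  have hV := hcorrect p hcf
  set V := (voters p) \ Faulty with hVdef
  -- correct voters in Received report higher
  have hsub : V ∩ Received ⊆ Received.filter reportsHigher := by
    intro x hx
    rw [Finset.mem_inter] at hx
    obtain ⟨hxV, hxR⟩ := hx
    rw [hVdef, Finset.mem_sdiff] at hxV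
    exact Finset.mem_filter.mpr ⟨hxR, hreport x hxR hxV.2 p hxV.1 hlt⟩
  have h3 : (V ∩ Received).card ≤ (Received.filter reportsHigher).card :=
    Finset.card_le_card hsub
  have h4 : V.card ≤ (V ∩ Received).card + (V \ Received).card := by
    have := Finset.card_le_card_sdiff_add_card (s := V) (t := Received)
    have h5 : (V \ Received).card + (V ∩ Received).card = V.card := by
      rw [Finset.card_sdiff_add_card_inter]
    omega
  have h6 : (V \ Received).card ≤ k := by
    have hcompl : (V \ Received).card ≤ Fintype.card Replica - Received.card := by
      have : V \ Received ⊆ Receivedᶜ := by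
        intro x hx
        rw [Finset.mem_sdiff] at hx
        simpa using hx.2
      have := Finset.card_le_card this
      simpa [Finset.card_compl] using this
    have hkn : k ≤ n := by omega
    omega
  omega
end
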